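/- arXiv:2002.06845 — 6 statements merged into one kernel-verified Lean document; each statement's English description precedes it below -/
import Mathlib

section
/- Let R be an artinian local ring with finite residue field, and let 0 → M → N → L → 0 be a short exact sequence of R-modules equipped with an R-linear operator T acting equivariantly (i.e., commuting with the maps of the sequence). If T is locally finite on M and on L, then T is locally finite on N. -/
/-!
Lift a finite generating set of a `T`-stable submodule of `L` containing the image of `n` to a
finitely generated `Q ≤ N`. As `s(T Q) ⊆ s(Q)` and `ker s = i(M)`, both `n` and `T Q` lie in
`Q + i(M)`, hence, having finitely many generators, in `Q + i(D)` for some finitely generated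
`D ≤ M`. Enlarging `D` to a `T`-stable finitely generated submodule of `M` makes `Q + i(D)` the
required `T`-stable submodule of `N`.
-/

namespace Submodule

variable {R M N : Type*} [Semiring R] [AddCommMonoid M] [Module R M]
  [AddCommMonoid N] [Module R N] {f : M →ₗ[R] N}

theorem FG.exists_fg_map_eq (hf : Function.Surjective f) {P : Submodule R N} (hP : P.FG) :
    ∃ Q : Submodule R M, Q.FG ∧ Q.map f = P := by
  induction P, hP using fg_induction with
  | singleton x =>
    obtain ⟨y, rfl⟩ := hf x
    exact ⟨R ∙ y, fg_span_singleton y, by rw [map_span, Set.image_singleton]⟩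
  | sup P₁ P₂ _ _ h₁ h₂ =>
    obtain ⟨Q₁, hQ₁, rfl⟩ := h₁
    obtain ⟨Q₂, hQ₂, rfl⟩ := h₂
    exact ⟨Q₁ ⊔ Q₂, hQ₁.sup hQ₂, Submodule.map_sup Q₁ Q₂ f⟩

theorem FG.exists_fg_le_sup_map {A P : Submodule R N} (hP : P.FG)
    (hle : P ≤ A ⊔ LinearMap.range f) :
    ∃ D : Submodule R M, D.FG ∧ P ≤ A ⊔ D.map f := by
  induction P, hP using fg_induction with
  | singleton x =>
    obtain ⟨a, ha, _, ⟨m, rfl⟩, rfl⟩ := mem_sup.1 (span_singleton_le_iff_mem x _ |>.1 hle)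
    refine ⟨R ∙ m, fg_span_singleton m, (span_singleton_le_iff_mem _ _).2 ?_⟩
    exact add_mem (mem_sup_left ha) (mem_sup_right ⟨m, mem_span_singleton_self m, rfl⟩)
  | sup P₁ P₂ _ _ h₁ h₂ =>
    obtain ⟨D₁, hD₁, hle₁⟩ := h₁ (le_sup_left.trans hle)
    obtain ⟨D₂, hD₂, hle₂⟩ := h₂ (le_sup_right.trans hle)
    refine ⟨D₁ ⊔ D₂, hD₁.sup hD₂, sup_le ?_ ?_⟩
    · exact hle₁.trans (sup_le_sup_left (map_mono le_sup_left) A)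
    · exact hle₂.trans (sup_le_sup_left (map_mono le_sup_right) A)

end Submodule

namespace Module.End

open Submodule

section Semiring

variable {R M : Type*} [Semiring R] [AddCommMonoid M] [Module R M]

def IsLocallyFinite (T : Module.End R M) : Prop :=
  ∀ m : M, ∃ P : Submodule R M, P.FG ∧ P.map T ≤ P ∧ m ∈ P

theorem IsLocallyFinite.exists_fg_le {T : Module.End R M} (hT : T.IsLocallyFinite)
    {P : Submodule R M} (hP : P.FG) :
    ∃ Q : Submodule R M, Q.FG ∧ Q.map T ≤ Q ∧ P ≤ Q := by
  induction P, hP using fg_induction with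
  | singleton x =>
    obtain ⟨Q, hQ, hQT, hxQ⟩ := hT x
    exact ⟨Q, hQ, hQT, (span_singleton_le_iff_mem x Q).2 hxQ⟩
  | sup P₁ P₂ _ _ h₁ h₂ =>
    obtain ⟨Q₁, hQ₁, hQ₁T, hPQ₁⟩ := h₁
    obtain ⟨Q₂, hQ₂, hQ₂T, hPQ₂⟩ := h₂
    refine ⟨Q₁ ⊔ Q₂, hQ₁.sup hQ₂, ?_, sup_le_sup hPQ₁ hPQ₂⟩
    rw [Submodule.map_sup]
    exact sup_le_sup hQ₁T hQ₂T

end Semiring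

variable {R M N L : Type*} [Ring R] [AddCommGroup M] [Module R M] [AddCommGroup N] [Module R N]
  [AddCommGroup L] [Module R L]

theorem IsLocallyFinite.of_exact {i : M →ₗ[R] N} {s : N →ₗ[R] L} (hs : Function.Surjective s)
    (hexact : LinearMap.range i = LinearMap.ker s)
    {TM : Module.End R M} {TN : Module.End R N} {TL : Module.End R L}
    (hiT : i ∘ₗ TM = TN ∘ₗ i) (hsT : s ∘ₗ TN = TL ∘ₗ s)
    (hM : TM.IsLocallyFinite) (hL : TL.IsLocallyFinite) : TN.IsLocallyFinite := by
  intro n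
  obtain ⟨PL, hPL, hPLT, hnPL⟩ := hL (s n)
  obtain ⟨Q, hQ, rfl⟩ := hPL.exists_fg_map_eq hs
  have hQ_sup : Q ⊔ LinearMap.range i = (Q.map s).comap s := by
    rw [hexact, comap_map_eq]
  have hTQ : Q.map TN ≤ Q ⊔ LinearMap.range i := by
    rw [hQ_sup, ← map_le_iff_le_comap, ← map_comp, hsT, map_comp]
    exact hPLT
  have hn : n ∈ Q ⊔ LinearMap.range i := hQ_sup ▸ hnPL
  obtain ⟨D, hD, hle⟩ := ((fg_span_singleton n).sup (hQ.map TN)).exists_fg_le_sup_map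
    (sup_le ((span_singleton_le_iff_mem n _).2 hn) hTQ)
  obtain ⟨DM, hDM, hDMT, hDDM⟩ := hM.exists_fg_le hD
  have hle' : (R ∙ n) ⊔ Q.map TN ≤ Q ⊔ DM.map i :=
    hle.trans (sup_le_sup_left (map_mono hDDM) Q)
  refine ⟨Q ⊔ DM.map i, hQ.sup (hDM.map i), ?_, hle' (mem_sup_left (mem_span_singleton_self n))⟩
  rw [Submodule.map_sup, ← map_comp, ← hiT, map_comp]
  exact sup_le (le_sup_right.trans hle') ((map_mono hDMT).trans le_sup_right)

end Module.End

theorem statement4_general (R : Type*) [CommRing R]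
    (M N L : Type*) [AddCommGroup M] [Module R M] [AddCommGroup N] [Module R N]
    [AddCommGroup L] [Module R L]
    (i : M →ₗ[R] N) (s : N →ₗ[R] L)
    (hs : Function.Surjective s)
    (hexact : LinearMap.range i = LinearMap.ker s)
    (TM : Module.End R M) (TN : Module.End R N) (TL : Module.End R L)
    (hiT : i ∘ₗ TM = TN ∘ₗ i) (hsT : s ∘ₗ TN = TL ∘ₗ s)
    (hM : ∀ m : M, ∃ P : Submodule R M, P.FG ∧ P.map TM ≤ P ∧ m ∈ P)
    (hL : ∀ l : L, ∃ P : Submodule R L, P.FG ∧ P.map TL ≤ P ∧ l ∈ P) :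
    ∀ n : N, ∃ P : Submodule R N, P.FG ∧ P.map TN ≤ P ∧ n ∈ P :=
  Module.End.IsLocallyFinite.of_exact hs hexact hiT hsT hM hL

/-- Let `0 → M → N → L → 0` be a short exact sequence of `R`-modules over an
artinian local ring `R` with finite residue field, with an `R`-linear operator `T`
acting equivariantly on `M`, `N`, `L`.  If `T` is locally finite on `M` and on `L`,
then `T` is locally finite on `N`. -/
theorem statement4 (R : Type*) [CommRing R] [IsArtinianRing R] [IsLocalRing R]
    [Finite (IsLocalRing.ResidueField R)]
    (M N L : Type*) [AddCommGroup M] [Module R M] [AddCommGroup N] [Module R N]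
    [AddCommGroup L] [Module R L]
    (i : M →ₗ[R] N) (s : N →ₗ[R] L)
    (hi : Function.Injective i) (hs : Function.Surjective s)
    (hexact : LinearMap.range i = LinearMap.ker s)
    (TM : Module.End R M) (TN : Module.End R N) (TL : Module.End R L)
    (hiT : i ∘ₗ TM = TN ∘ₗ i) (hsT : s ∘ₗ TN = TL ∘ₗ s)
    (hM : ∀ m : M, ∃ P : Submodule R M, P.FG ∧ P.map TM ≤ P ∧ m ∈ P)
    (hL : ∀ l : L, ∃ P : Submodule R L, P.FG ∧ P.map TL ≤ P ∧ l ∈ P) :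
    ∀ n : N, ∃ P : Submodule R N, P.FG ∧ P.map TN ≤ P ∧ n ∈ P :=
  statement4_general R M N L i s hs hexact TM TN TL hiT hsT hM hL
end

section
/- Let R be an artinian local ring with finite residue field, and let 0 → M → N → L → 0 be a short exact sequence of R-modules with a locally finite R-linear operator T acting equivariantly on all three. Then the induced sequence 0 → e(T)M → e(T)N → e(T)L → 0 is exact, where e(T) is the associated ordinary idempotent. -/
/-!
The projectors are natural: `f ∘ e = e ∘ f` for every `T`-equivariant map `f`, so `e` is an
idempotent endomorphism of the identity functor and therefore preserves exact sequences.
For `x ∈ e M`, pick a finitely generated `T`-stable `P ∋ x`. Over an artinian ring `T` is injective,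
hence bijective, on `P ∩ e M`, so `x` is divisible by every power of `T` inside `P`; but `T` is
uniformly nilpotent on the finitely generated module `(1 - e) f(P)`, whence `(1 - e) f x = 0`.
On the other side, `f` sends `(1 - e) M` to `T`-nilpotent elements, which `e` kills because `T` is
injective on `e N`.
-/

open LinearMap

section

variable {R : Type*} [Ring R] {X Y : Type*} [AddCommGroup X] [Module R X]
  [AddCommGroup Y] [Module R Y]

theorem eq_zero_of_pow_apply_eq_zero_of_injOn {T : Module.End R X} {D : Submodule R X}
    (hmaps : Set.MapsTo T D D) (hinj : Set.InjOn T D) {k : ℕ} {x : X} (hx : x ∈ D)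
    (hk : (T ^ k) x = 0) : x = 0 :=
  hinj.iterate hmaps k hx D.zero_mem (by rw [← Module.End.pow_apply, hk, iterate_map_zero])

theorem Submodule.FG.exists_le_ker_pow {T : Module.End R X} {W : Submodule R X} (hW : W.FG)
    (hnil : ∀ w ∈ W, ∃ k : ℕ, (T ^ k) w = 0) : ∃ K : ℕ, W ≤ ker (T ^ K) := by
  have hmono : Monotone fun k => ker (T ^ k) := fun _ _ hkl _ hw =>
    Module.End.pow_map_zero_of_le hkl hw
  have hle : W ≤ ⨆ k, ker (T ^ k) := fun w hw =>
    let ⟨k, hk⟩ := hnil w hw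
    Submodule.mem_iSup_of_mem k hk
  obtain ⟨_, ⟨K, rfl⟩, hK⟩ := (CompleteLattice.isCompactElement_iff_le_of_directed_sSup_le _ _).1
    ((Submodule.fg_iff_compact W).1 hW) _ (Set.range_nonempty _)
    hmono.directed_le.directedOn_range hle
  exact ⟨K, hK⟩

theorem exists_mem_pow_apply_eq_of_injOn {T : Module.End R X} {Q : Submodule R X}
    [IsArtinian R Q] (hmaps : Set.MapsTo T Q Q) (hinj : Set.InjOn T Q) (k : ℕ) {x : X}
    (hx : x ∈ Q) : ∃ q ∈ Q, (T ^ k) q = x := by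
  have hbij : Function.Bijective (T.restrict hmaps) :=
    IsArtinian.bijective_of_injective_endomorphism _ fun a b hab =>
      Subtype.ext (hinj a.2 b.2 (congrArg Subtype.val hab))
  obtain ⟨q, hq⟩ := (hbij.surjective.iterate k) ⟨x, hx⟩
  refine ⟨q, q.2, ?_⟩
  rw [← Module.End.pow_apply, Module.End.pow_restrict k hmaps] at hq
  exact congrArg Subtype.val hq

variable {f : X →ₗ[R] Y} {TX : Module.End R X} {TY : Module.End R Y}
  {eX : Module.End R X} {eY : Module.End R Y}

theorem map_mem_range_of_injOn [IsArtinianRing R] (hf : f ∘ₗ TX = TY ∘ₗ f)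
    (hX : ∀ x : X, ∃ P : Submodule R X, P.FG ∧ P.map TX ≤ P ∧ x ∈ P)
    {D : Submodule R X} (hmaps : Set.MapsTo TX D D) (hinj : Set.InjOn TX D)
    (hcY : eY * TY = TY * eY) (hnY : ∀ y ∈ range (1 - eY), ∃ k : ℕ, (TY ^ k) y = 0)
    {x : X} (hx : x ∈ D) : f x ∈ range eY := by
  obtain ⟨P, hPfg, hPT, hxP⟩ := hX x
  obtain ⟨K, hK⟩ := ((hPfg.map f).map (1 - eY)).exists_le_ker_pow (T := TY)
    fun _ ⟨y, _, hy⟩ => hnY _ ⟨y, hy⟩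
  have : IsArtinian R P := isArtinian_of_fg_of_artinian P hPfg
  have : IsArtinian R (P ⊓ D : Submodule R X) := isArtinian_of_le inf_le_left
  obtain ⟨q, hq, rfl⟩ := exists_mem_pow_apply_eq_of_injOn (Q := P ⊓ D)
    (fun z hz => ⟨hPT (Submodule.mem_map_of_mem hz.1), hmaps hz.2⟩)
    (hinj.mono inf_le_right) K ⟨hxP, hx⟩
  have hkill : (1 - eY) (f ((TX ^ K) q)) = 0 := by
    rw [← LinearMap.comp_apply f, ← Module.End.commute_pow_left_of_commute hf.symm K,
      LinearMap.comp_apply, ← Module.End.mul_apply,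
      (((Commute.one_left TY).sub_left hcY).pow_right K).eq, Module.End.mul_apply]
    exact hK (Submodule.mem_map_of_mem (Submodule.mem_map_of_mem hq.1))
  rw [LinearMap.sub_apply, Module.End.one_apply, sub_eq_zero] at hkill
  exact ⟨_, hkill.symm⟩

theorem comp_eq_comp_of_injOn_of_pow_eq_zero [IsArtinianRing R] (hf : f ∘ₗ TX = TY ∘ₗ f)
    (hX : ∀ x : X, ∃ P : Submodule R X, P.FG ∧ P.map TX ≤ P ∧ x ∈ P)
    (hmapsX : Set.MapsTo TX (range eX) (range eX)) (hinjX : Set.InjOn TX (range eX))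
    (hnX : ∀ x ∈ range (1 - eX), ∃ k : ℕ, (TX ^ k) x = 0)
    (heY : IsIdempotentElem eY) (hcY : eY * TY = TY * eY)
    (hmapsY : Set.MapsTo TY (range eY) (range eY)) (hinjY : Set.InjOn TY (range eY))
    (hnY : ∀ y ∈ range (1 - eY), ∃ k : ℕ, (TY ^ k) y = 0) :
    f ∘ₗ eX = eY ∘ₗ f := by
  ext x
  have hfix : eY (f (eX x)) = f (eX x) := heY.mem_range_iff.1
    (map_mem_range_of_injOn hf hX hmapsX hinjX hcY hnY (mem_range_self eX x))
  have hkill : eY (f ((1 - eX) x)) = 0 := by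
    obtain ⟨k, hk⟩ := hnX _ (mem_range_self _ x)
    refine eq_zero_of_pow_apply_eq_zero_of_injOn hmapsY hinjY (mem_range_self eY _) (k := k) ?_
    rw [← Module.End.mul_apply, ← (Commute.pow_right hcY k).eq, Module.End.mul_apply,
      ← LinearMap.comp_apply (TY ^ k), Module.End.commute_pow_left_of_commute hf.symm k,
      LinearMap.comp_apply, hk, map_zero, map_zero]
  calc f (eX x) = eY (f (eX x)) + eY (f ((1 - eX) x)) := by rw [hfix, hkill, add_zero]
    _ = eY (f x) := by rw [← map_add, ← map_add]; simp

theorem image_range_eq_range_inter_range (h : f ∘ₗ eX = eY ∘ₗ f) (heY : IsIdempotentElem eY) :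
    f '' (range eX : Set X) = (range eY : Set Y) ∩ Set.range f := by
  ext y
  constructor
  · rintro ⟨_, ⟨x, rfl⟩, rfl⟩
    exact ⟨⟨f x, (LinearMap.congr_fun h x).symm⟩, eX x, rfl⟩
  · rintro ⟨hy, x, rfl⟩
    exact ⟨eX x, mem_range_self eX x, (LinearMap.congr_fun h x).trans (heY.mem_range_iff.1 hy)⟩

end


theorem statement5_general (R : Type*) [CommRing R] [IsArtinianRing R]
    (M N L : Type*) [AddCommGroup M] [Module R M] [AddCommGroup N] [Module R N]
    [AddCommGroup L] [Module R L]
    (i : M →ₗ[R] N) (s : N →ₗ[R] L)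
    (hs : Function.Surjective s)
    (hexact : LinearMap.range i = LinearMap.ker s)
    (TM : Module.End R M) (TN : Module.End R N) (TL : Module.End R L)
    (hiT : i ∘ₗ TM = TN ∘ₗ i) (hsT : s ∘ₗ TN = TL ∘ₗ s)
    -- local finiteness of T on M, N and L:
    (hM : ∀ m : M, ∃ P : Submodule R M, P.FG ∧ P.map TM ≤ P ∧ m ∈ P)
    (hN : ∀ n : N, ∃ P : Submodule R N, P.FG ∧ P.map TN ≤ P ∧ n ∈ P)
    -- the ordinary projectors e(T) on M, N and L:
    (eM : Module.End R M) (eN : Module.End R N) (eL : Module.End R L)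
    (heN : IsIdempotentElem eN) (heL : IsIdempotentElem eL)
    (hcN : eN * TN = TN * eN) (hcL : eL * TL = TL * eL)
    (hbM : Set.BijOn TM (LinearMap.range eM : Set M) (LinearMap.range eM : Set M))
    (hbN : Set.BijOn TN (LinearMap.range eN : Set N) (LinearMap.range eN : Set N))
    (hbL : Set.BijOn TL (LinearMap.range eL : Set L) (LinearMap.range eL : Set L))
    (hnM : ∀ m ∈ LinearMap.range (1 - eM), ∃ k : ℕ, (TM ^ k) m = 0)
    (hnN : ∀ n ∈ LinearMap.range (1 - eN), ∃ k : ℕ, (TN ^ k) n = 0)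
    (hnL : ∀ l ∈ LinearMap.range (1 - eL), ∃ k : ℕ, (TL ^ k) l = 0) :
    -- exactness of 0 → e(T)M → e(T)N → e(T)L → 0
    (∀ m ∈ LinearMap.range eM, i m ∈ LinearMap.range eN) ∧
    (i '' (LinearMap.range eM : Set M) =
      {n : N | n ∈ LinearMap.range eN ∧ s n = 0}) ∧
    (s '' (LinearMap.range eN : Set N) = (LinearMap.range eL : Set L)) := by
  have hiN : i ∘ₗ eM = eN ∘ₗ i := comp_eq_comp_of_injOn_of_pow_eq_zero hiT hM
    hbM.mapsTo hbM.injOn hnM heN hcN hbN.mapsTo hbN.injOn hnN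
  have hsN : s ∘ₗ eN = eL ∘ₗ s := comp_eq_comp_of_injOn_of_pow_eq_zero hsT hN
    hbN.mapsTo hbN.injOn hnN heL hcL hbL.mapsTo hbL.injOn hnL
  refine ⟨?_, ?_, ?_⟩
  · rintro _ ⟨m, rfl⟩
    exact ⟨i m, (LinearMap.congr_fun hiN m).symm⟩
  · rw [image_range_eq_range_inter_range hiN heN, ← LinearMap.coe_range, hexact]
    rfl
  · rw [image_range_eq_range_inter_range hsN heL, hs.range_eq, Set.inter_univ]

/-- Let `0 → M → N → L → 0` be a short exact sequence of `R`-modules over an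
artinian local ring `R` with finite residue field, with a locally finite operator
`T` acting equivariantly on all three.  Let `eM`, `eN`, `eL` be the associated
ordinary idempotents `e(T)` (characterized by: idempotent, commuting with `T`,
`T` bijective on the image of `e`, and `T` locally nilpotent on the image of
`1 - e`).  Then `0 → e(T)M → e(T)N → e(T)L → 0` is exact. -/
theorem statement5 (R : Type*) [CommRing R] [IsArtinianRing R] [IsLocalRing R]
    [Finite (IsLocalRing.ResidueField R)]
    (M N L : Type*) [AddCommGroup M] [Module R M] [AddCommGroup N] [Module R N]
    [AddCommGroup L] [Module R L]
    (i : M →ₗ[R] N) (s : N →ₗ[R] L)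
    (hi : Function.Injective i) (hs : Function.Surjective s)
    (hexact : LinearMap.range i = LinearMap.ker s)
    (TM : Module.End R M) (TN : Module.End R N) (TL : Module.End R L)
    (hiT : i ∘ₗ TM = TN ∘ₗ i) (hsT : s ∘ₗ TN = TL ∘ₗ s)
    -- local finiteness of T on M, N and L:
    (hM : ∀ m : M, ∃ P : Submodule R M, P.FG ∧ P.map TM ≤ P ∧ m ∈ P)
    (hN : ∀ n : N, ∃ P : Submodule R N, P.FG ∧ P.map TN ≤ P ∧ n ∈ P)
    (hL : ∀ l : L, ∃ P : Submodule R L, P.FG ∧ P.map TL ≤ P ∧ l ∈ P)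
    -- the ordinary projectors e(T) on M, N and L:
    (eM : Module.End R M) (eN : Module.End R N) (eL : Module.End R L)
    (heM : IsIdempotentElem eM) (heN : IsIdempotentElem eN) (heL : IsIdempotentElem eL)
    (hcM : eM * TM = TM * eM) (hcN : eN * TN = TN * eN) (hcL : eL * TL = TL * eL)
    (hbM : Set.BijOn TM (LinearMap.range eM : Set M) (LinearMap.range eM : Set M))
    (hbN : Set.BijOn TN (LinearMap.range eN : Set N) (LinearMap.range eN : Set N))
    (hbL : Set.BijOn TL (LinearMap.range eL : Set L) (LinearMap.range eL : Set L))
    (hnM : ∀ m ∈ LinearMap.range (1 - eM), ∃ k : ℕ, (TM ^ k) m = 0)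
    (hnN : ∀ n ∈ LinearMap.range (1 - eN), ∃ k : ℕ, (TN ^ k) n = 0)
    (hnL : ∀ l ∈ LinearMap.range (1 - eL), ∃ k : ℕ, (TL ^ k) l = 0) :
    -- exactness of 0 → e(T)M → e(T)N → e(T)L → 0
    (∀ m ∈ LinearMap.range eM, i m ∈ LinearMap.range eN) ∧
    (i '' (LinearMap.range eM : Set M) =
      {n : N | n ∈ LinearMap.range eN ∧ s n = 0}) ∧
    (s '' (LinearMap.range eN : Set N) = (LinearMap.range eL : Set L)) :=
  statement5_general R M N L i s hs hexact TM TN TL hiT hsT hM hN eM eN eL heN heL hcN hcL hbM hbN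
    hbL hnM hnN hnL
end

section
/- Let R be an artinian local ring with finite residue field and let M be a profinite R-module (a topological R-module homeomorphic to a cofiltered limit of finite R-modules) with a continuous R-linear endomorphism T. Then T is locally finite (M has a basis of open neighborhoods of 0 consisting of T-stable open submodules) if and only if for every open submodule V ⊆ M, the submodule ⋂_{n≥0} T^{−n}(V) is open in M. -/
/-!
`⋂ₙ T⁻ⁿ(V)` is the largest `T`-stable submodule contained in `V`. If some `T`-stable open
submodule lies in `V`, it lies in this intersection, which is then open, being a submodule
containing an open one. Conversely, when these intersections are open they are `T`-stable
open submodules inside arbitrarily small open submodules `V`, and the latter form a basis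
of neighbourhoods of `0`.
-/

open Topology

namespace Submodule

variable {R M : Type*} [Semiring R] [AddCommMonoid M] [Module R M]

def stableCore (f : Module.End R M) (p : Submodule R M) : Submodule R M :=
  ⨅ n : ℕ, p.comap (f ^ n)

variable {f : Module.End R M} {p q : Submodule R M}

theorem coe_stableCore : (stableCore f p : Set M) = ⨅ n : ℕ, (p.comap (f ^ n) : Set M) := by
  rw [stableCore, coe_iInf, Set.iInf_eq_iInter]

theorem mem_stableCore {x : M} : x ∈ stableCore f p ↔ ∀ n : ℕ, (f ^ n) x ∈ p := by
  simp only [stableCore, mem_iInf, mem_comap]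

theorem stableCore_le : stableCore f p ≤ p := fun x hx => by
  simpa using mem_stableCore.mp hx 0

theorem map_stableCore_le : (stableCore f p).map f ≤ stableCore f p := by
  rw [map_le_iff_le_comap]
  intro x hx
  rw [mem_comap, mem_stableCore]
  intro n
  simpa only [pow_succ, Module.End.mul_apply] using mem_stableCore.mp hx (n + 1)

theorem le_stableCore (hq : q.map f ≤ q) (hqp : q ≤ p) : q ≤ stableCore f p :=
  le_iInf fun n => (q.le_comap_pow_of_le_comap (map_le_iff_le_comap.mp hq) n).trans
    (comap_mono hqp)

end Submodule

open Submodule in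
theorem statement7_general (R : Type*) [CommRing R]
    (M : Type*) [AddCommGroup M] [Module R M] [TopologicalSpace M]
    [IsTopologicalAddGroup M]
    (hbasis : ∀ U ∈ 𝓝 (0 : M), ∃ V : Submodule R M,
      IsOpen (V : Set M) ∧ Finite (M ⧸ V) ∧ (V : Set M) ⊆ U)
    (T : Module.End R M) :
    (∀ U ∈ 𝓝 (0 : M), ∃ V : Submodule R M,
        IsOpen (V : Set M) ∧ V.map T ≤ V ∧ (V : Set M) ⊆ U) ↔
      (∀ V : Submodule R M, IsOpen (V : Set M) →
        IsOpen ((⨅ n : ℕ, V.comap (T ^ n)) : Set M)) := by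
  constructor
  · intro hstable V hV
    obtain ⟨W, hWopen, hWT, hWV⟩ := hstable V (hV.mem_nhds V.zero_mem)
    rw [← coe_stableCore]
    exact isOpen_mono (le_stableCore hWT hWV) hWopen
  · intro hcore U hU
    obtain ⟨V, hV, -, hVU⟩ := hbasis U hU
    refine ⟨stableCore T V, by rw [coe_stableCore]; exact hcore V hV, map_stableCore_le, ?_⟩
    exact (SetLike.coe_subset_coe.mpr stableCore_le).trans hVU

/-- Let `M` be a profinite module over an artinian local ring `R` with finite
residue field (a separated complete topological `R`-module with a basis of
neighborhoods of `0` consisting of open submodules of finite index, i.e. a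
cofiltered limit of finite modules — equivalently a compact, totally
disconnected Hausdorff topological module with such a basis), and `T` a
continuous `R`-linear endomorphism.  Then `T` is locally finite (there is a
basis of open neighborhoods of `0` consisting of `T`-stable open submodules)
iff for every open submodule `V ⊆ M` the submodule `⋂_{n ≥ 0} T^{-n}(V)` is
open in `M`. -/
theorem statement7 (R : Type*) [CommRing R] [IsArtinianRing R] [IsLocalRing R]
    [Finite (IsLocalRing.ResidueField R)]
    (M : Type*) [AddCommGroup M] [Module R M] [TopologicalSpace M]
    [IsTopologicalAddGroup M] [CompactSpace M] [T2Space M]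
    [TotallyDisconnectedSpace M]
    (hbasis : ∀ U ∈ 𝓝 (0 : M), ∃ V : Submodule R M,
      IsOpen (V : Set M) ∧ Finite (M ⧸ V) ∧ (V : Set M) ⊆ U)
    (T : Module.End R M) (hT : Continuous T) :
    (∀ U ∈ 𝓝 (0 : M), ∃ V : Submodule R M,
        IsOpen (V : Set M) ∧ V.map T ≤ V ∧ (V : Set M) ⊆ U) ↔
      (∀ V : Submodule R M, IsOpen (V : Set M) →
        IsOpen ((⨅ n : ℕ, V.comap (T ^ n)) : Set M)) :=
  statement7_general R M hbasis T
end

section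
/- Let M be a profinite module over an artinian local ring R with finite residue field, T a continuous R-linear endomorphism, and V an open submodule of M. Then ⋂_{n≥0} T^{−n}(V) is open if and only if there exists n ≥ 1 with ⋂_{i=0}^{n−1} T^{−i}(V) ⊆ T^{−n}(V). -/
open Filter Topology

/-!
If `⋂ₙ T⁻ⁿ V` is open, then compactness of its closed complement, covered by the complements of
the open (hence closed) subgroups `T⁻ⁱ V`, shows that finitely many of them already cut out the
intersection. Conversely, once `Pₙ = ⋂_{i<n} T⁻ⁱ V` lies in `T⁻ⁿ V`, the submodule `Pₙ` is
`T`-stable and contained in `V`, so it equals the full intersection, and it is open as a finite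
intersection of open sets.
-/

theorem exists_finset_biInter_subset_iInter {X ι : Type*} [TopologicalSpace X] [CompactSpace X]
    {s : ι → Set X} (hs : ∀ i, IsClosed (s i)) (ho : IsOpen (⋂ i, s i)) :
    ∃ t : Finset ι, ⋂ i ∈ t, s i ⊆ ⋂ i, s i := by
  obtain ⟨t, ht⟩ :=
    ho.isClosed_compl.isCompact.elim_finite_subfamily_closed s hs (Set.compl_inter_self _)
  exact ⟨t, fun x hx => by_contra fun hx' => Set.eq_empty_iff_forall_notMem.mp ht x ⟨hx', hx⟩⟩

theorem exists_biInter_range_subset_iInter {X : Type*} [TopologicalSpace X] [CompactSpace X]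
    {s : ℕ → Set X} (hs : ∀ i, IsClosed (s i)) (ho : IsOpen (⋂ i, s i)) :
    ∃ n, ⋂ i ∈ Finset.range n, s i ⊆ ⋂ i, s i := by
  obtain ⟨t, ht⟩ := exists_finset_biInter_subset_iInter hs ho
  exact ⟨_, (Set.biInter_subset_biInter_left (Finset.subset_range_sup_succ t)).trans ht⟩

namespace Module.End

variable {R M : Type*} [Semiring R] [AddCommMonoid M] [Module R M] (T : Module.End R M)
  (V : Submodule R M)

theorem mem_biInf_range_comap_pow {n : ℕ} {x : M} :
    x ∈ ⨅ i ∈ Finset.range n, V.comap (T ^ i) ↔ ∀ i < n, (T ^ i) x ∈ V := by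
  simp only [Submodule.mem_iInf, Finset.mem_range, Submodule.mem_comap]

theorem iInf_comap_pow_eq_of_le {n : ℕ}
    (h : ⨅ i ∈ Finset.range n, V.comap (T ^ i) ≤ V.comap (T ^ n)) :
    ⨅ m, V.comap (T ^ m) = ⨅ i ∈ Finset.range n, V.comap (T ^ i) := by
  set P := ⨅ i ∈ Finset.range n, V.comap (T ^ i)
  refine le_antisymm (le_iInf₂ fun i _ => iInf_le _ i) (le_iInf fun m x hx => ?_)
  have hupto : ∀ x ∈ P, ∀ i ≤ n, (T ^ i) x ∈ V := fun x hx i hi =>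
    hi.lt_or_eq.elim ((mem_biInf_range_comap_pow T V).mp hx i) (fun hin => hin ▸ h hx)
  have hstable : ∀ x ∈ P, T x ∈ P := fun x hx =>
    (mem_biInf_range_comap_pow T V).mpr fun i hi => by
      simpa only [pow_succ, mul_apply] using hupto x hx (i + 1) hi
  induction m generalizing x with
  | zero => exact hupto x hx 0 n.zero_le
  | succ m ih => simpa only [Submodule.mem_comap, pow_succ, mul_apply] using ih _ (hstable x hx)

end Module.End

theorem statement8_general (R : Type*) [CommRing R]
    (M : Type*) [AddCommGroup M] [Module R M] [TopologicalSpace M]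
    [IsTopologicalAddGroup M] [CompactSpace M]
    (T : Module.End R M) (hT : Continuous T)
    (V : Submodule R M) (hV : IsOpen (V : Set M)) :
    IsOpen ((⨅ n : ℕ, V.comap (T ^ n)) : Set M) ↔
      ∃ n : ℕ, 1 ≤ n ∧ (⨅ i ∈ Finset.range n, V.comap (T ^ i)) ≤ V.comap (T ^ n) := by
  have hopen (n : ℕ) : IsOpen (V.comap (T ^ n) : Set M) :=
    hV.preimage (by simpa only [Module.End.coe_pow] using hT.iterate n)
  constructor
  · intro hW
    obtain ⟨n, hn⟩ := exists_biInter_range_subset_iInter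
      (fun i => (V.comap (T ^ i)).toAddSubgroup.isClosed_of_isOpen (hopen i)) hW
    refine ⟨n + 1, n.succ_pos, fun x hx => ?_⟩
    have hxn : x ∈ ⋂ i ∈ Finset.range n, (V.comap (T ^ i) : Set M) :=
      Set.mem_iInter₂.mpr fun i hi => (Module.End.mem_biInf_range_comap_pow T V).mp hx i
        (Nat.lt_succ_of_lt (Finset.mem_range.mp hi))
    exact Set.mem_iInter.mp (hn hxn) (n + 1)
  · rintro ⟨n, -, h⟩
    rw [Set.iInf_eq_iInter, ← Submodule.coe_iInf, Module.End.iInf_comap_pow_eq_of_le T V h]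
    simpa only [Submodule.coe_iInf] using isOpen_biInter_finset fun i _ => hopen i

/-- Let `M` be a profinite module over an artinian local ring `R` with finite
residue field, `T` a continuous `R`-linear endomorphism, and `V` an open
submodule of `M`.  Then `⋂_{n ≥ 0} T^{-n}(V)` is open iff there exists `n ≥ 1`
with `⋂_{i=0}^{n-1} T^{-i}(V) ⊆ T^{-n}(V)`. -/
theorem statement8 (R : Type*) [CommRing R] [IsArtinianRing R] [IsLocalRing R]
    [Finite (IsLocalRing.ResidueField R)]
    (M : Type*) [AddCommGroup M] [Module R M] [TopologicalSpace M]
    [IsTopologicalAddGroup M] [CompactSpace M] [T2Space M]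
    [TotallyDisconnectedSpace M]
    (hbasis : ∀ U ∈ 𝓝 (0 : M), ∃ W : Submodule R M,
      IsOpen (W : Set M) ∧ Finite (M ⧸ W) ∧ (W : Set M) ⊆ U)
    (T : Module.End R M) (hT : Continuous T)
    (V : Submodule R M) (hV : IsOpen (V : Set M)) :
    IsOpen ((⨅ n : ℕ, V.comap (T ^ n)) : Set M) ↔
      ∃ n : ℕ, 1 ≤ n ∧ (⨅ i ∈ Finset.range n, V.comap (T ^ i)) ≤ V.comap (T ^ n) :=
  statement8_general R M T hT V hV
end

section
/- Let 0 → M → N → L → 0 be a strict short exact sequence of profinite modules over an artinian local ring R with finite residue field (strict meaning the surjection N → L is open), and let T be a continuous R-linear operator acting equivariantly on M, N, L. If T is locally finite on M and on L, then T is locally finite on N. -/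
open Filter Topology

/-- Let `0 → M → N → L → 0` be a strict short exact sequence of profinite
modules over an artinian local ring `R` with finite residue field (strict: the
surjection `N → L` is open), with a continuous `R`-linear operator `T` acting
equivariantly.  If `T` is locally finite on `M` and on `L` (basis of open
`T`-stable submodules), then `T` is locally finite on `N`. -/
theorem statement9 (R : Type*) [CommRing R] [IsArtinianRing R] [IsLocalRing R]
    [Finite (IsLocalRing.ResidueField R)]
    (M N L : Type*)
    [AddCommGroup M] [Module R M] [TopologicalSpace M] [IsTopologicalAddGroup M]
    [CompactSpace M] [T2Space M] [TotallyDisconnectedSpace M]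
    [AddCommGroup N] [Module R N] [TopologicalSpace N] [IsTopologicalAddGroup N]
    [CompactSpace N] [T2Space N] [TotallyDisconnectedSpace N]
    [AddCommGroup L] [Module R L] [TopologicalSpace L] [IsTopologicalAddGroup L]
    [CompactSpace L] [T2Space L] [TotallyDisconnectedSpace L]
    (hbasisM : ∀ U ∈ 𝓝 (0 : M), ∃ V : Submodule R M,
      IsOpen (V : Set M) ∧ Finite (M ⧸ V) ∧ (V : Set M) ⊆ U)
    (hbasisN : ∀ U ∈ 𝓝 (0 : N), ∃ V : Submodule R N,
      IsOpen (V : Set N) ∧ Finite (N ⧸ V) ∧ (V : Set N) ⊆ U)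
    (hbasisL : ∀ U ∈ 𝓝 (0 : L), ∃ V : Submodule R L,
      IsOpen (V : Set L) ∧ Finite (L ⧸ V) ∧ (V : Set L) ⊆ U)
    (i : M →ₗ[R] N) (s : N →ₗ[R] L)
    (hic : Continuous i) (hsc : Continuous s)
    (hi : Function.Injective i) (hs : Function.Surjective s)
    (hexact : LinearMap.range i = LinearMap.ker s)
    (hstrict : IsOpenMap s)
    (TM : Module.End R M) (TN : Module.End R N) (TL : Module.End R L)
    (hTMc : Continuous TM) (hTNc : Continuous TN) (hTLc : Continuous TL)
    (hiT : i ∘ₗ TM = TN ∘ₗ i) (hsT : s ∘ₗ TN = TL ∘ₗ s)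
    (hM : ∀ U ∈ 𝓝 (0 : M), ∃ V : Submodule R M,
      IsOpen (V : Set M) ∧ V.map TM ≤ V ∧ (V : Set M) ⊆ U)
    (hL : ∀ U ∈ 𝓝 (0 : L), ∃ V : Submodule R L,
      IsOpen (V : Set L) ∧ V.map TL ≤ V ∧ (V : Set L) ⊆ U) :
    ∀ U ∈ 𝓝 (0 : N), ∃ V : Submodule R N,
      IsOpen (V : Set N) ∧ V.map TN ≤ V ∧ (V : Set N) ⊆ U := by
  intro U hU
  -- an open submodule W ⊆ U
  obtain ⟨W, hWo, -, hWU⟩ := hbasisN U hU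
  have hW0 : (0 : N) ∈ W := W.zero_mem
  -- a TM-stable open submodule V_M ⊆ i⁻¹ W
  have hpre : (i ⁻¹' W) ∈ 𝓝 (0 : M) := by
    refine (hWo.preimage hic).mem_nhds ?_
    simp [W.zero_mem]
  obtain ⟨VM, hVMo, hVMst, hVMsub⟩ := hM _ hpre
  set A : Submodule R N := VM.map i with hA
  have hAW : (A : Set N) ⊆ W := by
    rintro _ ⟨m, hm, rfl⟩; exact hVMsub hm
  have hAker : ∀ a ∈ A, s a = 0 := by
    rintro _ ⟨m, hm, rfl⟩
    have : i m ∈ LinearMap.ker s := hexact ▸ LinearMap.mem_range_self i m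
    exact this
  have hAst : ∀ a ∈ A, TN a ∈ A := by
    rintro _ ⟨m, hm, rfl⟩
    have : TN (i m) = i (TM m) := by
      have := LinearMap.congr_fun hiT m
      simpa using this.symm
    rw [this]
    exact ⟨TM m, hVMst ⟨m, hm, rfl⟩, rfl⟩
  -- the compact set K = i '' (V_M)ᶜ ; choose open submodule Ω ⊆ W with Ω ∩ K = ∅
  set K : Set N := i '' ((VM : Set M)ᶜ) with hK
  have hKc : IsCompact K := (hVMo.isClosed_compl.isCompact).image hic
  have h0K : (0 : N) ∉ K := by
    rintro ⟨m, hm, hm0⟩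
    exact hm (by rw [show m = 0 from hi (by simpa using hm0)]; exact VM.zero_mem)
  have hnb : Kᶜ ∩ (W : Set N) ∈ 𝓝 (0 : N) := by
    refine (IsOpen.inter hKc.isClosed.isOpen_compl hWo).mem_nhds ⟨h0K, hW0⟩
  obtain ⟨Ω, hΩo, -, hΩsub⟩ := hbasisN _ hnb
  have hΩW : (Ω : Set N) ⊆ W := fun x hx => (hΩsub hx).2
  have hΩker : ∀ x ∈ Ω, s x = 0 → x ∈ A := by
    intro x hx hx0
    have hxr : x ∈ LinearMap.range i := hexact ▸ (by exact hx0 : x ∈ LinearMap.ker s)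
    obtain ⟨m, rfl⟩ := hxr
    by_contra hmem
    exact (hΩsub hx).1 ⟨m, fun hmV => hmem ⟨m, hmV, rfl⟩, rfl⟩
  -- S = A ⊔ Ω, open
  set S : Submodule R N := A ⊔ Ω with hS
  have hSo : IsOpen (S : Set N) := Submodule.isOpen_mono le_sup_right hΩo
  -- F compact, s '' F compact, 0 ∉ s '' F
  set F : Set N := (Ω : Set N) ∩ (TN ⁻¹' (S : Set N))ᶜ with hF
  have hΩcl : IsClosed (Ω : Set N) := Ω.toAddSubgroup.isClosed_of_isOpen hΩo
  have hFc : IsCompact (s '' F) :=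
    ((hΩcl.inter (hSo.preimage hTNc).isClosed_compl).isCompact).image hsc
  have h0F : (0 : L) ∉ s '' F := by
    rintro ⟨x, ⟨hxΩ, hxS⟩, hx0⟩
    exact hxS (Submodule.mem_sup_left (hAst _ (hΩker x hxΩ hx0)))
  -- choose TL-stable open V_L disjoint from s '' F
  obtain ⟨VL, hVLo, hVLst, hVLsub⟩ := hL ((s '' F)ᶜ)
    (hFc.isClosed.isOpen_compl.mem_nhds h0F)
  -- the final submodule
  refine ⟨A ⊔ (Ω ⊓ VL.comap s), Submodule.isOpen_mono le_sup_right
    (hΩo.inter (hVLo.preimage hsc)), ?_, ?_⟩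
  · -- stability
    have key : ∀ y, y ∈ Ω → s y ∈ VL → TN y ∈ A ⊔ (Ω ⊓ VL.comap s) := by
      intro y hyΩ hyL
      have hyF : y ∉ F := by
        intro hyF
        exact hVLsub hyL ⟨y, hyF, rfl⟩
      have hyS : TN y ∈ S := by
        by_contra h
        exact hyF ⟨hyΩ, h⟩
      obtain ⟨a, ha, ω, hω, hsum⟩ := Submodule.mem_sup.mp hyS
      have hsω : s ω ∈ VL := by
        have h1 : s (TN y) = TL (s y) := by simpa using LinearMap.congr_fun hsT y
        have h2 : s ω = TL (s y) := by
          rw [← h1, ← hsum]; simp [hAker a ha]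
        rw [h2]
        exact hVLst ⟨s y, hyL, rfl⟩
      rw [← hsum]
      exact add_mem (Submodule.mem_sup_left ha)
        (Submodule.mem_sup_right ⟨hω, hsω⟩)
    rintro _ ⟨x, hx, rfl⟩
    obtain ⟨a, ha, y, hy, hsum⟩ := Submodule.mem_sup.mp hx
    rw [← hsum, map_add]
    exact add_mem (Submodule.mem_sup_left (hAst a ha)) (key y hy.1 hy.2)
  · -- containment in U
    intro x hx
    obtain ⟨a, ha, y, hy, hsum⟩ := Submodule.mem_sup.mp hx
    refine hWU ?_
    rw [← hsum]
    exact W.add_mem (hAW ha) (hΩW hy.1)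
end

section
/- Let M be a profinite module over an artinian local ring R with finite residue field and T a continuous locally finite R-linear endomorphism. Then there is an idempotent e(T) commuting with T such that T restricts to an isomorphism of e(T)·M and T is topologically nilpotent on (1−e(T))·M, i.e., T^N m → 0 as N → ∞ for every m ∈ (1−e(T))M. -/
open Filter Topology
open scoped Nat

/-- Let `M` be a profinite module over an artinian local ring `R` with finite
residue field and `T` a continuous locally finite `R`-linear endomorphism.
Then there is an idempotent `e(T)` commuting with `T` such that `T` restricts
to an isomorphism of `e(T)·M` and `T` is topologically nilpotent on
`(1 - e(T))·M`, i.e. `T^n m → 0` for every `m ∈ (1 - e(T))M`. -/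
theorem statement11 (R : Type*) [CommRing R] [IsArtinianRing R] [IsLocalRing R]
    [Finite (IsLocalRing.ResidueField R)]
    (M : Type*) [AddCommGroup M] [Module R M] [TopologicalSpace M]
    [IsTopologicalAddGroup M] [CompactSpace M] [T2Space M]
    [TotallyDisconnectedSpace M]
    (hbasis : ∀ U ∈ 𝓝 (0 : M), ∃ V : Submodule R M,
      IsOpen (V : Set M) ∧ Finite (M ⧸ V) ∧ (V : Set M) ⊆ U)
    (T : Module.End R M) (hT : Continuous T)
    (hlf : ∀ U ∈ 𝓝 (0 : M), ∃ V : Submodule R M,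
      IsOpen (V : Set M) ∧ V.map T ≤ V ∧ (V : Set M) ⊆ U) :
    ∃ e : Module.End R M, IsIdempotentElem e ∧ e * T = T * e ∧
      Set.BijOn T (LinearMap.range e : Set M) (LinearMap.range e : Set M) ∧
      ∀ m ∈ LinearMap.range (1 - e),
        Tendsto (fun n : ℕ => (T ^ n) m) atTop (𝓝 0) := by
  classical
  -- Good submodules: open, T-stable, finite quotient
  set P : Submodule R M → Prop :=
    fun V => IsOpen (V : Set M) ∧ (∀ x ∈ V, T x ∈ V) ∧ Finite (M ⧸ V) with hP
  -- basis of good submodules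
  have good : ∀ U ∈ 𝓝 (0 : M), ∃ V : Submodule R M, P V ∧ (V : Set M) ⊆ U := by
    intro U hU
    obtain ⟨W, hWo, hWf, hWU⟩ := hbasis U hU
    obtain ⟨V, hVo, hVT, hVW⟩ := hlf W (hWo.mem_nhds (zero_mem W))
    refine ⟨V, ⟨hVo, fun x hx => hVT ⟨x, hx, rfl⟩, ?_⟩, hVW.trans hWU⟩
    have : Finite (M ⧸ V.toAddSubgroup) := AddSubgroup.quotient_finite_of_isOpen _ hVo
    exact this
  -- separation
  have sep : ∀ a : M, (∀ V : Submodule R M, P V → a ∈ V) → a = 0 := by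
    intro a h
    by_contra hne
    obtain ⟨U, W, hUo, hWo, h0U, haW, hd⟩ := t2_separation (Ne.symm hne)
    obtain ⟨V, hPV, hVU⟩ := good U (hUo.mem_nhds h0U)
    exact Set.disjoint_left.mp hd (hVU (h V hPV)) haW
  -- T-powers preserve good submodules
  have hpow : ∀ (V : Submodule R M), (∀ x ∈ V, T x ∈ V) →
      ∀ (j : ℕ) (x : M), x ∈ V → (T ^ j) x ∈ V := by
    intro V hV j
    induction j with
    | zero => intro x hx; simpa using hx
    | succ k ih =>
      intro x hx
      rw [pow_succ']
      exact hV _ (ih x hx)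
  -- periodicity on finite quotients
  have period : ∀ (V : Submodule R M), P V → ∀ m : M,
      ∃ i p : ℕ, 0 < p ∧ ∀ n, i ≤ n → ∀ c : ℕ, (T ^ (n + c * p)) m - (T ^ n) m ∈ V := by
    rintro V ⟨hVo, hVT, hVf⟩ m
    obtain ⟨a, b, hab, heq⟩ := Finite.exists_ne_map_eq_of_infinite
      (fun n : ℕ => Submodule.Quotient.mk (p := V) ((T ^ n) m))
    wlog hlt : a < b generalizing a b
    · exact this b a hab.symm heq.symm (by omega)
    refine ⟨a, b - a, by omega, ?_⟩
    have hone : ∀ n, a ≤ n → (T ^ (n + (b - a))) m - (T ^ n) m ∈ V := by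
      intro n hn
      obtain ⟨d, rfl⟩ := Nat.exists_eq_add_of_le hn
      induction d with
      | zero =>
        rw [show a + 0 + (b - a) = b from by omega, show a + 0 = a from by omega]
        exact (Submodule.Quotient.eq V).mp heq.symm
      | succ k ih =>
        have h1 := hVT _ (ih (by omega))
        rw [map_sub] at h1
        have e1 : T ((T ^ (a + k + (b - a))) m) = (T ^ (a + (k+1) + (b-a))) m := by
          rw [show a + (k+1) + (b-a) = (a + k + (b-a)) + 1 by omega, pow_succ']; rfl
        have e2 : T ((T ^ (a + k)) m) = (T ^ (a + (k+1))) m := by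
          rw [show a + (k+1) = (a + k) + 1 by omega, pow_succ']; rfl
        rwa [e1, e2] at h1
    intro n hn c
    induction c with
    | zero => simp
    | succ k ih =>
      have h2 := hone (n + k * (b - a)) (by omega)
      have h3 := V.add_mem h2 ih
      simpa [show n + (k+1) * (b-a) = n + k*(b-a) + (b-a) by ring] using h3
  -- stabilization of the sequences n ↦ T^(n! - s) m modulo good V, s = 0 or 1
  have stab : ∀ (s : ℕ) (m : M) (V : Submodule R M), P V →
      ∃ N : ℕ, ∀ a, N ≤ a → ∀ b, N ≤ b → (T ^ ((a !) - s)) m - (T ^ ((b !) - s)) m ∈ V := by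
    intro s m V hPV
    obtain ⟨i, p, hp, hper⟩ := period V hPV m
    refine ⟨i + p + s + 1, ?_⟩
    -- first handle the ordered case
    have key : ∀ a b, i + p + s + 1 ≤ b → b ≤ a → (T ^ ((a !) - s)) m - (T ^ ((b !) - s)) m ∈ V := by
      intro a b hb hba
      have hfle : b ! ≤ a ! := Nat.factorial_le hba
      have hbs : s + 1 ≤ b := by omega
      have hbfact : b ≤ b ! := Nat.self_le_factorial b
      have hpb : p ∣ b ! := Nat.dvd_factorial hp (by omega)
      have hpa : p ∣ a ! := Nat.dvd_factorial hp (by omega)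
      have hdiff : p ∣ (a !) - (b !) := Nat.dvd_sub hpa hpb
      obtain ⟨c, hc⟩ := hdiff
      rw [Nat.mul_comm] at hc
      have hexp : (a !) - s = ((b !) - s) + c * p := by
        have := Nat.factorial_pos b
        omega
      rw [hexp, mul_comm c p, show p * c = c * p from by ring]
      exact hper ((b !) - s) (by omega) c
    intro a ha b hb
    rcases le_total b a with h | h
    · exact key a b hb h
    · have := key b a ha h
      simpa using V.neg_mem this
  -- uniform space structure
  letI : UniformSpace M := IsTopologicalAddGroup.rightUniformSpace M
  haveI : IsUniformAddGroup M := isUniformAddGroup_of_addCommGroup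
  -- Cauchy criterion
  have hcauchy : ∀ u : ℕ → M,
      (∀ U ∈ 𝓝 (0 : M), ∃ N, ∀ a, N ≤ a → ∀ b, N ≤ b → u a - u b ∈ U) → CauchySeq u := by
    intro u hu
    rw [cauchySeq_iff]
    intro W hW
    rw [uniformity_eq_comap_nhds_zero'] at hW
    obtain ⟨U, hU, hUW⟩ := Filter.mem_comap.mp hW
    obtain ⟨N, hN⟩ := hu U hU
    exact ⟨N, fun k hk l hl => hUW (by simpa [← sub_eq_add_neg] using hN l hl k hk)⟩
  -- the sequences converge
  have hconv : ∀ (s : ℕ) (m : M), ∃ L : M,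
      Tendsto (fun n : ℕ => (T ^ ((n !) - s)) m) atTop (𝓝 L) := by
    intro s m
    have hc : CauchySeq (fun n : ℕ => (T ^ ((n !) - s)) m) := by
      apply hcauchy
      intro U hU
      obtain ⟨V, hPV, hVU⟩ := good U hU
      obtain ⟨N, hN⟩ := stab s m V hPV
      exact ⟨N, fun a ha b hb => hVU (hN a ha b hb)⟩
    exact ⟨_, hc.tendsto_limUnder⟩
  choose e₀ he₀ using fun m => hconv 0 m
  -- limits modulo good submodules
  have evmem : ∀ (m : M) (V : Submodule R M), P V →
      ∀ᶠ n in atTop, e₀ m - (T ^ (n !)) m ∈ V := by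
    intro m V hPV
    have hnb : {x : M | e₀ m - x ∈ V} ∈ 𝓝 (e₀ m) := by
      have hc : Tendsto (fun x : M => e₀ m - x) (𝓝 (e₀ m)) (𝓝 0) := by
        have := (continuous_const.sub continuous_id (f := fun x : M => e₀ m)).tendsto (e₀ m)
        simpa [Pi.sub_def] using this
      exact hc (hPV.1.mem_nhds (zero_mem V))
    have := (he₀ m).eventually_mem hnb
    simpa using this
  -- linearity of e₀
  have hadd : ∀ x y : M, e₀ (x + y) = e₀ x + e₀ y := by
    intro x y
    have : ∀ V : Submodule R M, P V → e₀ (x + y) - (e₀ x + e₀ y) ∈ V := by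
      intro V hPV
      obtain ⟨n, h1, h2, h3⟩ :=
        ((evmem (x+y) V hPV).and ((evmem x V hPV).and (evmem y V hPV))).exists
      have hsum := V.sub_mem (V.sub_mem h1 h2) h3
      have heq : e₀ (x + y) - (T ^ n !) (x + y) - (e₀ x - (T ^ n !) x)
          - (e₀ y - (T ^ n !) y) = e₀ (x + y) - (e₀ x + e₀ y) := by
        rw [map_add]; abel
      rwa [heq] at hsum
    have := sep _ this
    rwa [sub_eq_zero] at this
  have hsmul : ∀ (r : R) (x : M), e₀ (r • x) = r • e₀ x := by
    intro r x
    have : ∀ V : Submodule R M, P V → e₀ (r • x) - r • e₀ x ∈ V := by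
      intro V hPV
      obtain ⟨n, h1, h2⟩ := ((evmem (r • x) V hPV).and (evmem x V hPV)).exists
      have hsum := V.sub_mem h1 (V.smul_mem r h2)
      have heq : e₀ (r • x) - (T ^ n !) (r • x) - r • (e₀ x - (T ^ n !) x)
          = e₀ (r • x) - r • e₀ x := by
        rw [map_smul, smul_sub]; abel
      rwa [heq] at hsum
    have := sep _ this
    rwa [sub_eq_zero] at this
  set e : Module.End R M :=
    { toFun := e₀
      map_add' := hadd
      map_smul' := hsmul } with he
  have heapp : ∀ m, e m = e₀ m := fun m => rfl
  -- commutation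
  have hcomm : ∀ m : M, e (T m) = T (e m) := by
    intro m
    have : ∀ V : Submodule R M, P V → e (T m) - T (e m) ∈ V := by
      intro V hPV
      obtain ⟨n, h1, h2⟩ := ((evmem (T m) V hPV).and (evmem m V hPV)).exists
      -- T^{n!}(T m) = T^{n!+1} m and T (e m) - T^{n!+1} m ∈ V
      have h2' := hPV.2.1 _ h2
      rw [map_sub] at h2'
      have e2 : T ((T ^ n !) m) = (T ^ (n ! + 1)) m := by rw [pow_succ']; rfl
      have e1 : (T ^ n !) (T m) = (T ^ (n ! + 1)) m := by rw [pow_succ]; rfl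
      rw [e2] at h2'
      rw [e1] at h1
      have hsum := V.sub_mem h1 h2'
      have heq : e₀ (T m) - (T ^ (n ! + 1)) m - (T (e₀ m) - (T ^ (n ! + 1)) m)
          = e₀ (T m) - T (e₀ m) := by abel
      rw [heq] at hsum
      exact hsum
    have := sep _ this
    rwa [sub_eq_zero] at this
  -- idempotence
  have hidem : ∀ m : M, e (e m) = e m := by
    intro m
    have : ∀ V : Submodule R M, P V → e (e m) - e m ∈ V := by
      intro V hPV
      obtain ⟨i, p, hp, hper⟩ := period V hPV m
      obtain ⟨n, h1, hnp⟩ := ((evmem (e m) V hPV).and (eventually_ge_atTop p)).exists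
      obtain ⟨k, h2, hki⟩ := ((evmem m V hPV).and (eventually_ge_atTop i)).exists
      -- h1 : e₀ (e m) - T^{n!} (e m) ∈ V
      -- h2 : e₀ m - T^{k!} m ∈ V
      have h2' : (T ^ n !) (e m) - (T ^ (k ! + n !)) m ∈ V := by
        have := hpow V hPV.2.1 (n !) _ h2
        rw [map_sub] at this
        have e3 : (T ^ n !) ((T ^ k !) m) = (T ^ (k ! + n !)) m := by
          rw [add_comm (k !) (n !), pow_add]; rfl
        rw [e3] at this
        exact this
      have h3 : (T ^ (k ! + n !)) m - (T ^ k !) m ∈ V := by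
        have hdvd : p ∣ n ! := Nat.dvd_factorial hp hnp
        obtain ⟨c, hc⟩ := hdvd
        rw [hc, show p * c = c * p from by ring]
        exact hper (k !) (le_trans hki (Nat.self_le_factorial k)) c
      have h4 : e m - (T ^ k !) m ∈ V := h2
      have hsum := V.sub_mem (V.add_mem (V.add_mem h1 h2') h3) h4
      have heq : e₀ (e m) - (T ^ n !) (e m) + ((T ^ n !) (e m) - (T ^ (k ! + n !)) m)
          + ((T ^ (k ! + n !)) m - (T ^ k !) m) - (e m - (T ^ k !) m)
          = e₀ (e m) - e m := by abel
      rw [heq] at hsum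
      exact hsum
    have := sep _ this
    rwa [sub_eq_zero] at this
  -- members of range e are fixed by e
  have hfix : ∀ a : M, a ∈ LinearMap.range e → e a = a := by
    rintro a ⟨x, rfl⟩
    exact hidem x
  refine ⟨e, ?_, ?_, ⟨?_, ?_, ?_⟩, ?_⟩
  · ext m; exact hidem m
  · ext m
    exact hcomm m
  · -- MapsTo
    rintro a ⟨x, rfl⟩
    exact ⟨T x, hcomm x⟩
  · -- InjOn
    intro a ha b hb hab
    have hm : e (a - b) = a - b := by
      rw [map_sub, hfix a ha, hfix b hb]
    have hTm : T (a - b) = 0 := by rw [map_sub, hab, sub_self]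
    have : a - b = 0 := by
      apply sep
      intro V hPV
      obtain ⟨n, h1, hn1⟩ := ((evmem (a - b) V hPV).and (eventually_ge_atTop 1)).exists
      have hz : (T ^ n !) (a - b) = 0 := by
        have hfac : n ! = ((n !) - 1) + 1 := by
          have := Nat.factorial_pos n
          omega
        rw [hfac, pow_succ]
        show (T ^ ((n !) - 1)) (T (a - b)) = 0
        rw [hTm, map_zero]
      rw [hz, sub_zero] at h1
      have h1' : e (a - b) ∈ V := h1
      rwa [hm] at h1'
    have := sub_eq_zero.mp this
    exact this
  · -- SurjOn
    rintro a ⟨x, rfl⟩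
    set a' := e x with ha'
    obtain ⟨b, hb⟩ := hconv 1 a'
    have hTb : T b = a' := by
      have h1 : Tendsto (fun n : ℕ => T ((T ^ ((n !) - 1)) a')) atTop (𝓝 (T b)) :=
        (hT.tendsto b).comp hb
      have h2 : (fun n : ℕ => T ((T ^ ((n !) - 1)) a')) = fun n : ℕ => (T ^ n !) a' := by
        funext n
        have hfac : n ! = ((n !) - 1) + 1 := by
          have := Nat.factorial_pos n
          omega
        rw [hfac, pow_succ']
        rfl
      rw [h2] at h1
      have h3 := tendsto_nhds_unique h1 (he₀ a')
      rw [h3]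
      exact hidem x
    refine ⟨e b, ⟨b, rfl⟩, ?_⟩
    show T (e b) = e x
    rw [← hcomm, hTb]
    exact hidem x
  · -- topological nilpotence
    rintro m ⟨x, rfl⟩
    have hm : e ((1 - e) x) = 0 := by
      have : (1 - e : Module.End R M) x = x - e x := rfl
      rw [this, map_sub, hidem, sub_self]
    rw [Filter.tendsto_def]
    intro U hU
    obtain ⟨V, hPV, hVU⟩ := good U hU
    obtain ⟨n, h1⟩ := (evmem ((1 - e) x) V hPV).exists
    have h1a : e ((1 - e) x) - (T ^ n !) ((1 - e) x) ∈ V := h1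
    rw [hm, zero_sub] at h1a
    have h1' := V.neg_mem h1a
    rw [neg_neg] at h1'
    have : ∀ k, n ! ≤ k → (T ^ k) ((1 - e) x) ∈ V := by
      intro k hk
      obtain ⟨d, rfl⟩ := Nat.exists_eq_add_of_le hk
      have hsp : (T ^ ((n !) + d)) ((1 - e) x) = (T ^ d) ((T ^ n !) ((1 - e) x)) := by
        rw [add_comm, pow_add]; rfl
      rw [hsp]
      exact hpow V hPV.2.1 _ _ h1'
    filter_upwards [eventually_ge_atTop (n !)] with k hk
    exact hVU (this k hk)
end
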